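/- arXiv:2206.02676 — 7 statements merged into one kernel-verified Lean document; each statement's English description precedes it below -/
import Mathlib

section
/- For every h = 1,…,n, setting c = cos(hπ/(n+1)), the matrix P_h = (n; 1/n, c/(n−1)) is the unique matrix in 𝒯 closest to x_h x_hᵀ in the Frobenius norm, and its Frobenius norm is ‖P_h‖_F = √(1/n + (2/(n−1)) c²) = κ(h). In particular, the structured condition number κ^𝒯(λ_h) = ‖(x_h x_hᵀ)|𝒯‖_F of the eigenvalue λ_h equals √(1/n + (2/(n−1)) cos²(hπ/(n+1))). -/
open Real Filter

noncomputable def tridiag (n : ℕ) (d s : ℝ) : Matrix (Fin n) (Fin n) ℝ :=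
  Matrix.of fun i j =>
    if (i : ℕ) = (j : ℕ) then d
    else if (i : ℕ) + 1 = (j : ℕ) ∨ (j : ℕ) + 1 = (i : ℕ) then s else 0

noncomputable def lam (n : ℕ) (δ σ : ℝ) (h : ℕ) : ℝ :=
  δ + 2 * σ * Real.cos (h * Real.pi / (n + 1))

noncomputable def kap (n h : ℕ) : ℝ :=
  Real.sqrt (1 / (n : ℝ) + 2 / ((n : ℝ) - 1) * Real.cos (h * Real.pi / (n + 1)) ^ 2)

noncomputable def evec (n h : ℕ) : Fin n → ℝ :=
  fun k => Real.sqrt (2 / (n + 1)) * Real.sin (h * (k.1 + 1) * Real.pi / (n + 1))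

noncomputable def frobNorm {n : ℕ} (A : Matrix (Fin n) (Fin n) ℝ) : ℝ :=
  Real.sqrt (∑ i, ∑ j, A i j ^ 2)

/-!
For the Frobenius inner product, `𝒯` is spanned by the orthogonal matrices `I` and `E` (ones on
the two off-diagonals), of squared norms `n` and `2(n-1)`. Hence the point of `𝒯` closest to `A`
is `(n; tr A / n, ⟪E, A⟫ / (2(n-1)))`, and `‖A - (n; d, s)‖²` exceeds the minimum by
`n (d - d₀)² + 2(n-1)(s - s₀)²`. For `A = x_h x_hᵀ` one has `tr A = ‖x_h‖² = 1` and
`⟪E, A⟫ = 2 ∑ₖ x_{h,k} x_{h,k+1} = 2 cos θ`, `θ = hπ/(n+1)`: by product-to-sum formulas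
both sums reduce to `∑_{k ≤ n} cos (a + 2kθ)`, which telescopes to `0` because `sin θ ≠ 0`
and `sin ((n+1)θ) = 0`.
-/

open Finset

namespace Real

variable {θ : ℝ}

lemma sin_add_two_mul_of_sin_eq_zero {φ : ℝ} (hφ : sin φ = 0) (b : ℝ) :
    sin (b + 2 * φ) = sin b := by
  rw [sin_add, sin_two_mul, cos_two_mul, cos_sq', hφ]; ring

lemma sum_range_cos_add_two_mul_eq_zero (hθ : sin θ ≠ 0) {N : ℕ} (hN : sin (N * θ) = 0)
    (a : ℝ) : ∑ k ∈ range N, cos (a + 2 * (k * θ)) = 0 := by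
  set f : ℕ → ℝ := fun k => sin (a + (2 * k - 1) * θ)
  have htel : ∀ k : ℕ, 2 * sin θ * cos (a + 2 * (k * θ)) = f (k + 1) - f k := by
    intro k
    rw [two_mul_sin_mul_cos, show θ - (a + 2 * (k * θ)) = -(a + (2 * k - 1) * θ) by ring,
      sin_neg]
    simp only [f]; push_cast; ring_nf
  have hper : f N = f 0 := by
    simp only [f]
    rw [← sin_add_two_mul_of_sin_eq_zero hN (a + (2 * ((0 : ℕ) : ℝ) - 1) * θ)]
    congr 1; push_cast; ring
  have hsum := Finset.sum_range_sub f N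
  simp_rw [← htel, ← Finset.mul_sum, hper, sub_self] at hsum
  simpa [hθ] using hsum

lemma sum_range_sin_sq (hθ : sin θ ≠ 0) {N : ℕ} (hN : sin (N * θ) = 0) :
    ∑ k ∈ range N, sin (k * θ) ^ 2 = N / 2 := by
  have h := sum_range_cos_add_two_mul_eq_zero hθ hN 0
  simp only [zero_add] at h
  simp_rw [sin_sq_eq_half_sub, Finset.sum_sub_distrib, ← Finset.sum_div, h]
  simp

lemma sum_range_sin_mul_sin_succ (hθ : sin θ ≠ 0) {N : ℕ} (hN : sin (N * θ) = 0) :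
    ∑ k ∈ range N, sin (k * θ) * sin ((k + 1) * θ) = N / 2 * cos θ := by
  have hprod : ∀ k : ℕ,
      sin (k * θ) * sin ((k + 1) * θ) = cos θ / 2 - cos (θ + 2 * (k * θ)) / 2 := by
    intro k
    have := two_mul_sin_mul_sin (k * θ) ((k + 1) * θ)
    rw [show (k : ℝ) * θ - (k + 1) * θ = -θ by ring, cos_neg,
      show (k : ℝ) * θ + (k + 1) * θ = θ + 2 * (k * θ) by ring] at this
    linarith
  simp_rw [hprod, Finset.sum_sub_distrib, ← Finset.sum_div,
    sum_range_cos_add_two_mul_eq_zero hθ hN θ]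
  simp; ring

variable {n : ℕ}

lemma sum_range_sin_succ_sq (hθ : sin θ ≠ 0) (hn : sin ((n + 1) * θ) = 0) :
    ∑ k ∈ range n, sin ((k + 1) * θ) ^ 2 = (n + 1) / 2 := by
  have h := sum_range_sin_sq hθ (N := n + 1) (by push_cast; exact hn)
  rw [Finset.sum_range_succ'] at h
  push_cast at h
  simpa using h

lemma sum_range_sin_succ_mul_sin_succ (hθ : sin θ ≠ 0) (hn : sin ((n + 1) * θ) = 0) :
    ∑ k ∈ range (n - 1), sin ((k + 1) * θ) * sin ((k + 2) * θ) = (n + 1) / 2 * cos θ := by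
  cases n with
  | zero => simp_all
  | succ m =>
    push_cast at hn
    have hN : sin (((m + 2 : ℕ) : ℝ) * θ) = 0 := by
      push_cast; rwa [add_assoc, one_add_one_eq_two] at hn
    have h := sum_range_sin_mul_sin_succ hθ hN
    rw [Finset.sum_range_succ, Finset.sum_range_succ'] at h
    push_cast at h ⊢
    rw [hn, mul_zero, add_zero, zero_mul, sin_zero, zero_mul, add_zero] at h
    simp only [add_assoc, one_add_one_eq_two] at h ⊢
    exact h

end Real

section Tridiagonal

lemma sum_fin_sum_fin_eq_sum_range_sum_range {n : ℕ} (F : ℕ → ℕ → ℝ) :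
    ∑ i : Fin n, ∑ j : Fin n, F i j = ∑ i ∈ range n, ∑ j ∈ range n, F i j := by
  rw [← Fin.sum_univ_eq_sum_range]
  exact Finset.sum_congr rfl fun i _ => Fin.sum_univ_eq_sum_range (F i) n

lemma sum_range_ite_succ_lt (n : ℕ) (f : ℕ → ℝ) :
    ∑ i ∈ range n, (if i + 1 < n then f i else 0) = ∑ i ∈ range (n - 1), f i := by
  cases n with
  | zero => simp
  | succ m =>
    rw [Finset.sum_range_succ, if_neg (lt_irrefl _), add_zero, Nat.add_sub_cancel]
    exact Finset.sum_congr rfl fun i hi => if_pos (by simpa using Finset.mem_range.mp hi)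

lemma sum_sum_ite_adjacent (n : ℕ) (F : ℕ → ℕ → ℝ) :
    ∑ i : Fin n, ∑ j : Fin n, (if (i : ℕ) + 1 = j ∨ (j : ℕ) + 1 = i then F i j else 0) =
      ∑ k ∈ range (n - 1), (F k (k + 1) + F (k + 1) k) := by
  rw [sum_fin_sum_fin_eq_sum_range_sum_range
    (fun i j => if i + 1 = j ∨ j + 1 = i then F i j else 0)]
  have hsplit : ∀ i j : ℕ, (if i + 1 = j ∨ j + 1 = i then F i j else 0) =
      (if j = i + 1 then F i j else 0) + (if i = j + 1 then F i j else 0) := by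
    intro i j; split_ifs <;> first | omega | simp
  simp_rw [hsplit, Finset.sum_add_distrib, Finset.sum_ite_eq', Finset.mem_range]
  rw [Finset.sum_comm (f := fun i j => if i = j + 1 then F i j else 0)]
  simp_rw [Finset.sum_ite_eq', Finset.mem_range, sum_range_ite_succ_lt]

variable {n : ℕ}

noncomputable def offDiagSum (A : Matrix (Fin n) (Fin n) ℝ) : ℝ :=
  ∑ i : Fin n, ∑ j : Fin n, if (i : ℕ) + 1 = j ∨ (j : ℕ) + 1 = i then A i j else 0

lemma sum_tridiag_mul (d s : ℝ) (A : Matrix (Fin n) (Fin n) ℝ) :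
    ∑ i, ∑ j, tridiag n d s i j * A i j = d * A.trace + s * offDiagSum A := by
  have hpt : ∀ i j : Fin n, tridiag n d s i j * A i j =
      (if i = j then d * A i j else 0) +
        s * (if (i : ℕ) + 1 = j ∨ (j : ℕ) + 1 = i then A i j else 0) := by
    intro i j
    simp only [tridiag, Matrix.of_apply, Fin.val_inj]
    split_ifs <;> first | omega | simp_all
  simp_rw [hpt, Finset.sum_add_distrib, Finset.sum_ite_eq, ← Finset.mul_sum]
  simp [Matrix.trace, offDiagSum, Finset.mul_sum]

lemma trace_tridiag (d s : ℝ) : (tridiag n d s).trace = n * d := by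
  simp [Matrix.trace, tridiag]

lemma offDiagSum_tridiag (d s : ℝ) :
    offDiagSum (tridiag n d s) = 2 * ((n - 1 : ℕ) : ℝ) * s := by
  have hentry : ∀ i j : Fin n,
      (if (i : ℕ) + 1 = j ∨ (j : ℕ) + 1 = i then tridiag n d s i j else 0) =
        if (i : ℕ) + 1 = j ∨ (j : ℕ) + 1 = i then s else 0 := by
    intro i j
    split_ifs with hij
    · simp only [tridiag, Matrix.of_apply]; rw [if_neg (by omega), if_pos hij]
    · rfl
  simp_rw [offDiagSum, hentry, sum_sum_ite_adjacent n fun _ _ => s]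
  simp; ring

lemma sum_sq_tridiag (d s : ℝ) :
    ∑ i, ∑ j, tridiag n d s i j ^ 2 = n * d ^ 2 + 2 * ((n - 1 : ℕ) : ℝ) * s ^ 2 := by
  simp_rw [sq, sum_tridiag_mul, trace_tridiag, offDiagSum_tridiag]
  ring

lemma sum_sq_sub_tridiag (A : Matrix (Fin n) (Fin n) ℝ) (d s : ℝ) :
    ∑ i, ∑ j, (A - tridiag n d s) i j ^ 2 =
      ∑ i, ∑ j, A i j ^ 2 - 2 * (d * A.trace + s * offDiagSum A) +
        (n * d ^ 2 + 2 * ((n - 1 : ℕ) : ℝ) * s ^ 2) := by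
  have hpt : ∀ i j, (A - tridiag n d s) i j ^ 2 =
      A i j ^ 2 - 2 * (tridiag n d s i j * A i j) + tridiag n d s i j ^ 2 := by
    intro i j; rw [Matrix.sub_apply]; ring
  simp_rw [hpt, Finset.sum_add_distrib, Finset.sum_sub_distrib, ← Finset.mul_sum,
    sum_tridiag_mul, sum_sq_tridiag]

-- The paper's `A|𝒯` when `n ≥ 2`.
noncomputable def tridiagProj (A : Matrix (Fin n) (Fin n) ℝ) : Matrix (Fin n) (Fin n) ℝ :=
  tridiag n (A.trace / n) (offDiagSum A / (2 * ((n : ℝ) - 1)))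

lemma sum_sq_sub_tridiag_eq_sum_sq_sub_tridiagProj_add (hn : 2 ≤ n)
    (A : Matrix (Fin n) (Fin n) ℝ) (d s : ℝ) :
    ∑ i, ∑ j, (A - tridiag n d s) i j ^ 2 =
      ∑ i, ∑ j, (A - tridiagProj A) i j ^ 2 + n * (d - A.trace / n) ^ 2 +
        2 * ((n : ℝ) - 1) * (s - offDiagSum A / (2 * ((n : ℝ) - 1))) ^ 2 := by
  have hn0 : (n : ℝ) ≠ 0 := by positivity
  have hn1 : (n : ℝ) - 1 ≠ 0 := (sub_pos.mpr (Nat.one_lt_cast.mpr hn)).ne'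
  rw [tridiagProj, sum_sq_sub_tridiag, sum_sq_sub_tridiag, Nat.cast_pred (by omega)]
  field_simp
  ring

theorem frobNorm_sub_tridiagProj_le (hn : 2 ≤ n) (A : Matrix (Fin n) (Fin n) ℝ) (d s : ℝ) :
    frobNorm (A - tridiagProj A) ≤ frobNorm (A - tridiag n d s) := by
  have : (0 : ℝ) < n - 1 := sub_pos.mpr (Nat.one_lt_cast.mpr hn)
  apply Real.sqrt_le_sqrt
  rw [sum_sq_sub_tridiag_eq_sum_sq_sub_tridiagProj_add hn A d s]
  have := sq_nonneg (d - A.trace / n)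
  have := sq_nonneg (s - offDiagSum A / (2 * ((n : ℝ) - 1)))
  nlinarith

theorem tridiag_eq_tridiagProj_of_frobNorm_eq (hn : 2 ≤ n) (A : Matrix (Fin n) (Fin n) ℝ)
    {d s : ℝ} (hds : frobNorm (A - tridiag n d s) = frobNorm (A - tridiagProj A)) :
    tridiag n d s = tridiagProj A := by
  have hn0 : (0 : ℝ) < n := by positivity
  have hn1 : (0 : ℝ) < n - 1 := sub_pos.mpr (Nat.one_lt_cast.mpr hn)
  have hnonneg : ∀ B : Matrix (Fin n) (Fin n) ℝ, 0 ≤ ∑ i, ∑ j, B i j ^ 2 := fun B =>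
    Finset.sum_nonneg fun _ _ => Finset.sum_nonneg fun _ _ => sq_nonneg _
  rw [frobNorm, frobNorm, Real.sqrt_inj (hnonneg _) (hnonneg _),
    sum_sq_sub_tridiag_eq_sum_sq_sub_tridiagProj_add hn A d s] at hds
  have hd := sq_nonneg (d - A.trace / n)
  have hs := sq_nonneg (s - offDiagSum A / (2 * ((n : ℝ) - 1)))
  have hd0 : (d - A.trace / n) ^ 2 = 0 := by nlinarith
  have hs0 : (s - offDiagSum A / (2 * ((n : ℝ) - 1))) ^ 2 = 0 := by nlinarith
  rw [tridiagProj, ← sub_eq_zero.mp (pow_eq_zero_iff two_ne_zero |>.mp hd0),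
    ← sub_eq_zero.mp (pow_eq_zero_iff two_ne_zero |>.mp hs0)]

lemma frobNorm_tridiag (d s : ℝ) :
    frobNorm (tridiag n d s) = √(n * d ^ 2 + 2 * ((n - 1 : ℕ) : ℝ) * s ^ 2) := by
  rw [frobNorm, sum_sq_tridiag]

lemma trace_of_mul (x : ℕ → ℝ) :
    (Matrix.of fun i j : Fin n => x i * x j).trace = ∑ k ∈ range n, x k ^ 2 := by
  simp only [Matrix.trace, Matrix.diag, Matrix.of_apply, ← sq]
  exact Fin.sum_univ_eq_sum_range (fun k => x k ^ 2) n

lemma offDiagSum_of_mul (x : ℕ → ℝ) :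
    offDiagSum (Matrix.of fun i j : Fin n => x i * x j) =
      2 * ∑ k ∈ range (n - 1), x k * x (k + 1) := by
  simp only [offDiagSum, Matrix.of_apply]
  rw [sum_sum_ite_adjacent n fun i j => x i * x j, Finset.mul_sum]
  exact Finset.sum_congr rfl fun k _ => by ring

lemma tridiagProj_of_mul (x : ℕ → ℝ) :
    tridiagProj (Matrix.of fun i j : Fin n => x i * x j) =
      tridiag n ((∑ k ∈ range n, x k ^ 2) / n)
        ((∑ k ∈ range (n - 1), x k * x (k + 1)) / ((n : ℝ) - 1)) := by
  rw [tridiagProj, trace_of_mul, offDiagSum_of_mul, mul_div_mul_left _ _ two_ne_zero]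

end Tridiagonal

noncomputable def sineVec (n : ℕ) (θ : ℝ) (k : ℕ) : ℝ :=
  √(2 / (n + 1)) * sin ((k + 1) * θ)

section SineVector

variable {n : ℕ} {θ : ℝ}

lemma sum_sineVec_sq (hθ : sin θ ≠ 0) (hn : sin ((n + 1) * θ) = 0) :
    ∑ k ∈ range n, sineVec n θ k ^ 2 = 1 := by
  simp_rw [sineVec, mul_pow, sq_sqrt (by positivity : (0 : ℝ) ≤ 2 / (n + 1)),
    ← Finset.mul_sum, Real.sum_range_sin_succ_sq hθ hn]
  field_simp

lemma sum_sineVec_mul_succ (hθ : sin θ ≠ 0) (hn : sin ((n + 1) * θ) = 0) :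
    ∑ k ∈ range (n - 1), sineVec n θ k * sineVec n θ (k + 1) = cos θ := by
  have hterm : ∀ k : ℕ, sineVec n θ k * sineVec n θ (k + 1) =
      2 / (n + 1) * (sin ((k + 1) * θ) * sin ((k + 2) * θ)) := by
    intro k
    rw [sineVec, sineVec, mul_mul_mul_comm, mul_self_sqrt (by positivity)]
    push_cast; ring_nf
  simp_rw [hterm, ← Finset.mul_sum, Real.sum_range_sin_succ_mul_sin_succ hθ hn]
  field_simp

lemma evec_eq_sineVec (h : ℕ) (k : Fin n) : evec n h k = sineVec n (h * π / (n + 1)) k := by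
  rw [evec, sineVec]; ring_nf

lemma sin_nat_mul_pi_div_succ_ne_zero {h : ℕ} (h1 : 1 ≤ h) (hh : h ≤ n) :
    sin (h * π / (n + 1)) ≠ 0 := by
  have hn : (0 : ℝ) < n + 1 := by positivity
  refine (sin_pos_of_pos_of_lt_pi (by positivity) ?_).ne'
  rw [div_lt_iff₀ hn]
  have : (h : ℝ) < n + 1 := by exact_mod_cast Nat.lt_succ_of_le hh
  nlinarith [pi_pos]

lemma sin_succ_mul_nat_mul_pi_div_succ (h : ℕ) : sin ((n + 1) * (h * π / (n + 1))) = 0 := by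
  rw [mul_div_cancel₀ _ (by positivity)]; exact sin_nat_mul_pi h

end SineVector

/-- `P_h = (n; 1/n, c/(n−1))` is the unique matrix in `𝒯` closest to `x_h x_hᵀ`
in the Frobenius norm, and `‖P_h‖_F = √(1/n + (2/(n−1)) c²) = κ(h)`, the structured condition
number of the eigenvalue `λ_h`. -/
theorem stmt_2 (n : ℕ) (hn : 2 ≤ n) (h : ℕ) (h1 : 1 ≤ h) (hh : h ≤ n)
    (c : ℝ) (hc : c = Real.cos (h * Real.pi / (n + 1)))
    (P : Matrix (Fin n) (Fin n) ℝ)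
    (hP : P = tridiag n (1 / (n : ℝ)) (c / ((n : ℝ) - 1)))
    (X : Matrix (Fin n) (Fin n) ℝ)
    (hX : X = Matrix.of fun i j => evec n h i * evec n h j) :
    (∀ d s : ℝ, frobNorm (X - P) ≤ frobNorm (X - tridiag n d s)) ∧
    (∀ d s : ℝ, frobNorm (X - tridiag n d s) = frobNorm (X - P) → tridiag n d s = P) ∧
    frobNorm P = Real.sqrt (1 / (n : ℝ) + 2 / ((n : ℝ) - 1) * c ^ 2) ∧
    frobNorm P = kap n h := by
  set θ : ℝ := h * π / (n + 1)
  have hsin : sin θ ≠ 0 := sin_nat_mul_pi_div_succ_ne_zero h1 hh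
  have hsin_succ : sin ((n + 1) * θ) = 0 := sin_succ_mul_nat_mul_pi_div_succ h
  have hPX : P = tridiagProj X := by
    simp_rw [evec_eq_sineVec] at hX
    rw [hP, hX, tridiagProj_of_mul, sum_sineVec_sq hsin hsin_succ,
      sum_sineVec_mul_succ hsin hsin_succ, hc]
  have hnormP : frobNorm P = √(1 / (n : ℝ) + 2 / ((n : ℝ) - 1) * c ^ 2) := by
    rw [hP, frobNorm_tridiag, Nat.cast_pred (by omega)]
    congr 1
    have : (n : ℝ) - 1 ≠ 0 := (sub_pos.mpr (Nat.one_lt_cast.mpr hn)).ne'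
    field_simp
  refine ⟨fun d s => hPX ▸ frobNorm_sub_tridiagProj_le hn X d s,
    fun d s hds => hPX ▸ tridiag_eq_tridiagProj_of_frobNorm_eq hn X (hPX ▸ hds), hnormP, ?_⟩
  rw [hnormP, kap, hc]
end

section
/- For every h = 1,…,n, setting c = cos(hπ/(n+1)) and P_h = (n; 1/n, c/(n−1)), the matrix M = T − (λ_h/κ(h)²) P_h is a symmetric tridiagonal Toeplitz matrix satisfying M x_h = 0 (so its h-th eigenvalue is zero and M is singular), and its distance to T in the Frobenius norm is ‖T − M‖_F = |λ_h|/κ(h). -/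
open Real Filter

lemma row_sum (n i : ℕ) (hi : i < n) (d s : ℝ) (g : ℕ → ℝ) :
    ∑ j ∈ Finset.range n,
      (if i = j then d else if i + 1 = j ∨ j + 1 = i then s else 0) * g j
    = d * g i + s * (if i + 1 < n then g (i + 1) else 0)
      + s * (if 1 ≤ i then g (i - 1) else 0) := by
  have hpt : ∀ j, (if i = j then d else if i + 1 = j ∨ j + 1 = i then s else 0) * g j
      = (if j = i then d * g j else 0) + (if j = i + 1 then s * g j else 0)
        + (if j + 1 = i then s * g j else 0) := by
    intro j
    split_ifs <;> first | (exfalso; omega) | ring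
  rw [Finset.sum_congr rfl (fun j _ => hpt j)]
  rw [Finset.sum_add_distrib, Finset.sum_add_distrib]
  rw [Finset.sum_ite_eq' (Finset.range n) i (fun j => d * g j)]
  rw [Finset.sum_ite_eq' (Finset.range n) (i+1) (fun j => s * g j)]
  have h3 : ∑ j ∈ Finset.range n, (if j + 1 = i then s * g j else 0)
      = s * (if 1 ≤ i then g (i - 1) else 0) := by
    rcases Nat.eq_zero_or_pos i with h0 | h0
    · subst h0; simp
    · have hiff : ∀ j, (j + 1 = i) ↔ (j = i - 1) := by intro j; omega
      simp only [hiff]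
      rw [Finset.sum_ite_eq' (Finset.range n) (i-1) (fun j => s * g j)]
      have hm : i - 1 ∈ Finset.range n := by simp; omega
      rw [if_pos hm, if_pos (by omega : 1 ≤ i)]
  rw [h3]
  simp only [Finset.mem_range, if_pos hi]
  split_ifs <;> ring

lemma tridiag_mulVec (n h : ℕ) (d s : ℝ) :
    (tridiag n d s).mulVec (evec n h)
    = (d + 2 * s * Real.cos (h * Real.pi / (n + 1))) • evec n h := by
  have hn1 : ((n : ℝ) + 1) ≠ 0 := by positivity
  set C := Real.sqrt (2 / ((n:ℝ) + 1)) with hC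
  set g : ℕ → ℝ := fun j => C * Real.sin (h * ((j:ℝ) + 1) * Real.pi / (n + 1)) with hg
  have key : ∀ k : ℕ, Real.sin ((h:ℝ) * k * Real.pi / (n + 1))
      + Real.sin ((h:ℝ) * ((k:ℝ) + 2) * Real.pi / (n + 1))
      = 2 * Real.cos ((h:ℝ) * Real.pi / (n + 1))
        * Real.sin ((h:ℝ) * ((k:ℝ) + 1) * Real.pi / (n + 1)) := by
    intro k
    rw [show (h:ℝ) * k * Real.pi / (n + 1)
        = (h:ℝ) * ((k:ℝ) + 1) * Real.pi / (n + 1) - (h:ℝ) * Real.pi / (n + 1) by ring,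
      show (h:ℝ) * ((k:ℝ) + 2) * Real.pi / (n + 1)
        = (h:ℝ) * ((k:ℝ) + 1) * Real.pi / (n + 1) + (h:ℝ) * Real.pi / (n + 1) by ring,
      Real.sin_sub, Real.sin_add]
    ring
  ext i
  have hi : (i : ℕ) < n := i.2
  simp only [Matrix.mulVec, dotProduct, tridiag, Matrix.of_apply, Pi.smul_apply,
    smul_eq_mul, evec]
  have hrw : ∀ j : Fin n,
      (if (i : ℕ) = (j : ℕ) then d
        else if (i : ℕ) + 1 = (j : ℕ) ∨ (j : ℕ) + 1 = (i : ℕ) then s else 0)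
        * (C * Real.sin (h * ((j:ℕ) + 1) * Real.pi / (n + 1)))
      = (fun j : ℕ => (if (i : ℕ) = j then d
          else if (i : ℕ) + 1 = j ∨ j + 1 = (i : ℕ) then s else 0) * g j) (j : ℕ) := by
    intro j; rfl
  rw [Finset.sum_congr rfl (fun j _ => hrw j),
    Fin.sum_univ_eq_sum_range (fun j : ℕ => (if (i : ℕ) = j then d
      else if (i : ℕ) + 1 = j ∨ j + 1 = (i : ℕ) then s else 0) * g j) n,
    row_sum n i hi d s g]
  have h2 : (if (i : ℕ) + 1 < n then g ((i : ℕ) + 1) else 0)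
      = C * Real.sin ((h:ℝ) * (((i:ℕ):ℝ) + 2) * Real.pi / (n + 1)) := by
    split_ifs with hlt
    · simp only [hg]; push_cast; ring_nf
    · have hie : (i : ℕ) + 1 = n := by omega
      have : (h:ℝ) * (((i:ℕ):ℝ) + 2) * Real.pi / (n + 1) = (h:ℝ) * Real.pi := by
        have : ((i:ℕ):ℝ) + 2 = (n:ℝ) + 1 := by
          have := congrArg (fun m : ℕ => (m : ℝ)) hie
          push_cast at this; linarith
        rw [this]; field_simp
      rw [this, Real.sin_nat_mul_pi]
      ring
  have h3 : (if 1 ≤ (i : ℕ) then g ((i : ℕ) - 1) else 0)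
      = C * Real.sin ((h:ℝ) * ((i:ℕ):ℝ) * Real.pi / (n + 1)) := by
    split_ifs with hge
    · simp only [hg]
      congr 2
      have : (((i:ℕ) - 1 : ℕ) : ℝ) = ((i:ℕ):ℝ) - 1 := by
        have : (1:ℕ) ≤ (i:ℕ) := hge
        push_cast [Nat.cast_sub this]; ring
      rw [this]; ring
    · have : (i : ℕ) = 0 := by omega
      rw [this]; simp
  rw [h2, h3]
  have hk := key (i : ℕ)
  simp only [hg]
  rw [← hC]
  linear_combination s * C * hk

/-- `M = T − (λ_h/κ(h)²) P_h` is a symmetric tridiagonal Toeplitz matrix with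
`M x_h = 0` (hence singular), and `‖T − M‖_F = |λ_h|/κ(h)`. -/
theorem stmt_3 (n : ℕ) (hn : 2 ≤ n) (δ σ : ℝ) (h : ℕ) (h1 : 1 ≤ h) (hh : h ≤ n)
    (c : ℝ) (hc : c = Real.cos (h * Real.pi / (n + 1)))
    (P M : Matrix (Fin n) (Fin n) ℝ)
    (hP : P = tridiag n (1 / (n : ℝ)) (c / ((n : ℝ) - 1)))
    (hM : M = tridiag n δ σ - (lam n δ σ h / kap n h ^ 2) • P) :
    (∃ d s : ℝ, M = tridiag n d s) ∧
    M.mulVec (evec n h) = 0 ∧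
    M.det = 0 ∧
    frobNorm (tridiag n δ σ - M) = |lam n δ σ h| / kap n h := by
  have hnR : (2:ℝ) ≤ (n:ℝ) := by exact_mod_cast hn
  have hn0 : (0:ℝ) < (n:ℝ) := by linarith
  have hn1 : (0:ℝ) < (n:ℝ) - 1 := by linarith
  set K : ℝ := 1/(n:ℝ) + 2/((n:ℝ)-1) * c^2 with hKdef
  have hK : 0 < K := by
    have h1' : 0 < 1/(n:ℝ) := by positivity
    have h2' : 0 ≤ 2/((n:ℝ)-1) * c^2 := by positivity
    rw [hKdef]; linarith
  have hkap : kap n h = Real.sqrt K := by rw [kap, ← hc, hKdef]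
  have hkap2 : kap n h ^ 2 = K := by rw [hkap, Real.sq_sqrt hK.le]
  have hkpos : 0 < kap n h := by rw [hkap]; exact Real.sqrt_pos.mpr hK
  set t := lam n δ σ h / kap n h ^ 2 with ht
  have hMt : M = tridiag n (δ - t * (1/(n:ℝ))) (σ - t * (c/((n:ℝ)-1))) := by
    rw [hM, hP]
    ext i j
    simp only [tridiag, Matrix.sub_apply, Matrix.smul_apply, Matrix.of_apply, smul_eq_mul]
    split_ifs <;> ring
  have htK : t * K = lam n δ σ h := by
    rw [ht, hkap2]; field_simp
  have hlamc : lam n δ σ h = δ + 2 * σ * c := by rw [lam, hc]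
  have hmv : M.mulVec (evec n h) = 0 := by
    rw [hMt, tridiag_mulVec, ← hc]
    have hz : (δ - t * (1/(n:ℝ))) + 2 * (σ - t * (c/((n:ℝ)-1))) * c = 0 := by
      have hKexp : K = 1/(n:ℝ) + 2/((n:ℝ)-1) * c^2 := hKdef
      have hl := hlamc
      have hne : ((n:ℝ)-1) ≠ 0 := ne_of_gt hn1
      have hnne : (n:ℝ) ≠ 0 := ne_of_gt hn0
      have : t * (1/(n:ℝ) + 2/((n:ℝ)-1) * c^2) = δ + 2 * σ * c := by
        rw [← hKexp, htK, hlamc]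
      field_simp at this ⊢
      linarith [this]
    rw [hz, zero_smul]
  have hvne : evec n h ≠ 0 := by
    intro h0
    have hpos : 0 < evec n h ⟨0, by omega⟩ := by
      have harg : (h:ℝ) * (((0:ℕ):ℝ) + 1) * Real.pi / ((n:ℝ) + 1)
          = (h:ℝ) * Real.pi / ((n:ℝ) + 1) := by norm_num
      have hh1 : (1:ℝ) ≤ (h:ℝ) := by exact_mod_cast h1
      have hhn : (h:ℝ) ≤ (n:ℝ) := by exact_mod_cast hh
      have hargpos : 0 < (h:ℝ) * Real.pi / ((n:ℝ) + 1) := by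
        have := Real.pi_pos
        apply div_pos (by nlinarith) (by linarith)
      have harglt : (h:ℝ) * Real.pi / ((n:ℝ) + 1) < Real.pi := by
        rw [div_lt_iff₀ (by linarith)]
        nlinarith [Real.pi_pos]
      have : 0 < Real.sin ((h:ℝ) * (((0:ℕ):ℝ) + 1) * Real.pi / ((n:ℝ) + 1)) := by
        rw [harg]; exact Real.sin_pos_of_pos_of_lt_pi hargpos harglt
      exact mul_pos (Real.sqrt_pos.mpr (by positivity)) this
    rw [h0] at hpos
    simp at hpos
  refine ⟨⟨_, _, hMt⟩, hmv, ?_, ?_⟩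
  · rw [← Matrix.exists_mulVec_eq_zero_iff]
    exact ⟨evec n h, hvne, hmv⟩
  · have hTM : tridiag n δ σ - M = t • P := by
      rw [hM]; exact sub_sub_cancel _ _
    have hPsum : ∑ i : Fin n, ∑ j : Fin n, (P i j)^2 = K := by
      rw [hP]
      set a : ℝ := 1/(n:ℝ) with ha
      set b : ℝ := c/((n:ℝ)-1) with hb
      have hrowpt : ∀ i : Fin n, ∀ j : Fin n, (tridiag n a b i j)^2
          = (if (i:ℕ) = (j:ℕ) then a^2
              else if (i:ℕ) + 1 = (j:ℕ) ∨ (j:ℕ) + 1 = (i:ℕ) then b^2 else 0)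
            * (fun _ : ℕ => (1:ℝ)) (j:ℕ) := by
        intro i j
        simp only [tridiag, Matrix.of_apply]
        split_ifs <;> ring
      have hrow : ∀ i : Fin n, ∑ j : Fin n, (tridiag n a b i j)^2
          = a^2 + b^2 * (if (i:ℕ) + 1 < n then (1:ℝ) else 0)
            + b^2 * (if 1 ≤ (i:ℕ) then (1:ℝ) else 0) := by
        intro i
        rw [Finset.sum_congr rfl (fun j _ => hrowpt i j)]
        have := row_sum n i i.2 (a^2) (b^2) (fun _ => (1:ℝ))
        rw [← Fin.sum_univ_eq_sum_range (fun j : ℕ => (if (i:ℕ) = j then a^2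
            else if (i:ℕ) + 1 = j ∨ j + 1 = (i:ℕ) then b^2 else 0) * (1:ℝ)) n] at this
        rw [this]
        split_ifs <;> ring
      rw [Finset.sum_congr rfl (fun i _ => hrow i)]
      rw [Fin.sum_univ_eq_sum_range (fun i : ℕ => a^2 + b^2 * (if i + 1 < n then (1:ℝ) else 0)
        + b^2 * (if 1 ≤ i then (1:ℝ) else 0)) n]
      rw [Finset.sum_add_distrib, Finset.sum_add_distrib, Finset.sum_const, Finset.card_range]
      have hind1 : ∑ i ∈ Finset.range n, b^2 * (if i + 1 < n then (1:ℝ) else 0)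
          = b^2 * ((n:ℝ) - 1) := by
        rw [← Finset.mul_sum]
        congr 1
        rw [← Finset.sum_filter]
        have hf : Finset.filter (fun i => i + 1 < n) (Finset.range n)
            = Finset.range (n-1) := by
          ext x; simp [Finset.mem_filter, Finset.mem_range]; omega
        rw [hf, Finset.sum_const, Finset.card_range, nsmul_eq_mul, mul_one]
        push_cast [Nat.cast_sub (by omega : 1 ≤ n)]
        ring
      have hind2 : ∑ i ∈ Finset.range n, b^2 * (if 1 ≤ i then (1:ℝ) else 0)
          = b^2 * ((n:ℝ) - 1) := by
        rw [← Finset.mul_sum]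
        congr 1
        rw [← Finset.sum_filter]
        have hf : Finset.filter (fun i => 1 ≤ i) (Finset.range n) = Finset.Ico 1 n := by
          ext x; simp [Finset.mem_filter, Finset.mem_range, Finset.mem_Ico]; omega
        rw [hf, Finset.sum_const, Nat.card_Ico, nsmul_eq_mul, mul_one]
        push_cast [Nat.cast_sub (by omega : 1 ≤ n)]
        ring
      rw [hind1, hind2, nsmul_eq_mul]
      rw [hKdef, ha, hb]
      have hne : ((n:ℝ)-1) ≠ 0 := ne_of_gt hn1
      have hnne : (n:ℝ) ≠ 0 := ne_of_gt hn0
      field_simp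
      ring
    rw [hTM, frobNorm]
    have hsmul : ∑ i : Fin n, ∑ j : Fin n, ((t • P) i j)^2
        = t^2 * ∑ i : Fin n, ∑ j : Fin n, (P i j)^2 := by
      simp only [Matrix.smul_apply, smul_eq_mul, mul_pow, Finset.mul_sum]
    rw [hsmul, hPsum]
    rw [Real.sqrt_mul (sq_nonneg t), Real.sqrt_sq_eq_abs]
    have habst : |t| = |lam n δ σ h| / K := by
      rw [ht, hkap2, abs_div, abs_of_pos hK]
    rw [habst, hkap]
    have hss : Real.sqrt K * Real.sqrt K = K := Real.mul_self_sqrt hK.le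
    have hsne : Real.sqrt K ≠ 0 := ne_of_gt (Real.sqrt_pos.mpr hK)
    rw [eq_div_iff hsne]
    calc |lam n δ σ h| / K * Real.sqrt K * Real.sqrt K
        = |lam n δ σ h| * (Real.sqrt K * Real.sqrt K) / K := by ring
      _ = |lam n δ σ h| := by rw [hss]; field_simp
end

section
/- For every h = 1,…,n, setting c = cos(hπ/(n+1)), δ* = 2(n c² δ − (n−1) c σ)/(n−1+2n c²) and σ* = ((n−1)σ − n c δ)/(n−1+2n c²), the matrix S*^𝒯 = (n; δ*, σ*) satisfies δ* + 2σ* c = 0 (so its h-th eigenvalue is zero and S*^𝒯 x_h = 0), and ‖T − S*^𝒯‖_F = |δ + 2cσ| / √(1/n + 2c²/(n−1)) = |λ_h|/κ(h). -/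
open Real Filter

lemma tridiag_apply (n : ℕ) (d s : ℝ) (i j : Fin n) :
    tridiag n d s i j =
      (if (i : ℕ) = (j : ℕ) then d else 0) +
      (if (i : ℕ) + 1 = (j : ℕ) then s else 0) +
      (if (j : ℕ) + 1 = (i : ℕ) then s else 0) := by
  simp only [tridiag, Matrix.of_apply]
  split_ifs <;> first | ring1 | (exfalso; omega)

lemma sum_if_eq (n : ℕ) (i : Fin n) (d : ℝ) (f : Fin n → ℝ) :
    ∑ j : Fin n, (if (i : ℕ) = (j : ℕ) then d else 0) * f j = d * f i := by
  rw [Finset.sum_eq_single i]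
  · simp
  · intro b _ hb
    rw [if_neg fun hv => hb (Fin.val_injective hv.symm), zero_mul]
  · simp

lemma sum_if_sup (n : ℕ) (i : Fin n) (s : ℝ) (g : ℕ → ℝ) (hg : g (n + 1) = 0) :
    ∑ j : Fin n, (if (i : ℕ) + 1 = (j : ℕ) then s else 0) * g ((j : ℕ) + 1) =
      s * g ((i : ℕ) + 2) := by
  by_cases hlt : (i : ℕ) + 1 < n
  · rw [Finset.sum_eq_single (⟨(i : ℕ) + 1, hlt⟩ : Fin n)]
    · simp
    · intro b _ hb
      rw [if_neg, zero_mul]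
      intro hv
      exact hb (Fin.ext hv.symm)
    · simp
  · have hi : (i : ℕ) + 1 = n := by have := i.isLt; omega
    rw [Finset.sum_eq_zero, eq_comm]
    · have : (i : ℕ) + 2 = n + 1 := by omega
      rw [this, hg, mul_zero]
    · intro b _
      rw [if_neg, zero_mul]
      have := b.isLt; omega

lemma sum_if_sub (n : ℕ) (i : Fin n) (s : ℝ) (g : ℕ → ℝ) (hg : g 0 = 0) :
    ∑ j : Fin n, (if (j : ℕ) + 1 = (i : ℕ) then s else 0) * g ((j : ℕ) + 1) =
      s * g (i : ℕ) := by
  by_cases hlt : 1 ≤ (i : ℕ)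
  · have hm : (i : ℕ) - 1 < n := by have := i.isLt; omega
    rw [Finset.sum_eq_single (⟨(i : ℕ) - 1, hm⟩ : Fin n)]
    · have h1 : ((⟨(i : ℕ) - 1, hm⟩ : Fin n) : ℕ) + 1 = (i : ℕ) := by simp; omega
      rw [if_pos h1, h1]
    · intro b _ hb
      rw [if_neg, zero_mul]
      intro hv
      apply hb
      apply Fin.ext
      simp
      omega
    · simp
  · have hi : (i : ℕ) = 0 := by omega
    rw [Finset.sum_eq_zero, hi, hg, mul_zero]
    intro b _
    rw [if_neg (by omega), zero_mul]

lemma tridiag_sum (n : ℕ) (hn : 1 ≤ n) (d s : ℝ) :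
    ∑ i : Fin n, ∑ j : Fin n, tridiag n d s i j = n * d + 2 * ((n : ℝ) - 1) * s := by
  have key : ∀ i : Fin n,
      ∑ j : Fin n, tridiag n d s i j
        = d + (if (i : ℕ) + 1 < n then s else 0) + (if 1 ≤ (i : ℕ) then s else 0) := by
    intro i
    have e1 : ∑ j : Fin n, (if (i : ℕ) = (j : ℕ) then d else 0) = d := by
      have := sum_if_eq n i d (fun _ => 1)
      simpa using this
    have e2 : ∑ j : Fin n, (if (i : ℕ) + 1 = (j : ℕ) then s else 0)
        = (if (i : ℕ) + 1 < n then s else 0) := by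
      by_cases hlt : (i : ℕ) + 1 < n
      · rw [if_pos hlt, Finset.sum_eq_single (⟨(i:ℕ)+1, hlt⟩ : Fin n)]
        · simp
        · intro b _ hb
          rw [if_neg]
          intro hv; exact hb (Fin.ext hv.symm)
        · simp
      · rw [if_neg hlt, Finset.sum_eq_zero]
        intro b _
        rw [if_neg]
        have := b.isLt; omega
    have e3 : ∑ j : Fin n, (if (j : ℕ) + 1 = (i : ℕ) then s else 0)
        = (if 1 ≤ (i : ℕ) then s else 0) := by
      by_cases hlt : 1 ≤ (i : ℕ)
      · have hm : (i : ℕ) - 1 < n := by have := i.isLt; omega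
        rw [if_pos hlt, Finset.sum_eq_single (⟨(i:ℕ)-1, hm⟩ : Fin n)]
        · rw [if_pos]; simp; omega
        · intro b _ hb
          rw [if_neg]
          intro hv; apply hb; apply Fin.ext; simp; omega
        · simp
      · rw [if_neg hlt, Finset.sum_eq_zero]
        intro b _
        rw [if_neg (by omega)]
    simp only [tridiag_apply, Finset.sum_add_distrib, e1, e2, e3]
  rw [Finset.sum_congr rfl (fun i _ => key i)]
  simp only [Finset.sum_add_distrib, Finset.sum_const, Finset.card_univ, Fintype.card_fin,
    nsmul_eq_mul]
  have c2 : ∑ i : Fin n, (if (i : ℕ) + 1 < n then s else 0) = ((n : ℝ) - 1) * s := by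
    rw [Fin.sum_univ_eq_sum_range (fun i => if i + 1 < n then s else 0) n]
    have : ∀ i, (if i + 1 < n then s else 0) = (if i ∈ Finset.range (n-1) then s else 0) := by
      intro i; congr 1; simp [Finset.mem_range]; constructor <;> (intro; omega)
    rw [Finset.sum_congr rfl (fun i _ => this i), Finset.sum_ite_mem,
      Finset.inter_eq_right.mpr (Finset.range_subset_range.mpr (by omega)), Finset.sum_const]
    simp [Nat.cast_sub hn, mul_comm]
  have c3 : ∑ i : Fin n, (if 1 ≤ (i : ℕ) then s else 0) = ((n : ℝ) - 1) * s := by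
    rw [Fin.sum_univ_eq_sum_range (fun i => if 1 ≤ i then s else 0) n]
    have hm : n - 1 + 1 = n := by omega
    rw [← hm, Finset.sum_range_succ']
    simp [Nat.cast_sub hn, mul_comm]
  rw [c2, c3]
  ring

/-- with `δ* = 2(nc²δ − (n−1)cσ)/(n−1+2nc²)` and
`σ* = ((n−1)σ − ncδ)/(n−1+2nc²)`, the matrix `S*^𝒯 = (n; δ*, σ*)` has null `h`-th eigenvalue
(`δ* + 2σ*c = 0`, so `S*^𝒯 x_h = 0`), and
`‖T − S*^𝒯‖_F = |δ + 2cσ|/√(1/n + 2c²/(n−1)) = |λ_h|/κ(h)`. -/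
theorem stmt_4 (n : ℕ) (hn : 2 ≤ n) (δ σ : ℝ) (h : ℕ) (h1 : 1 ≤ h) (hh : h ≤ n)
    (c δs σs : ℝ) (hc : c = Real.cos (h * Real.pi / (n + 1)))
    (hδs : δs = 2 * ((n : ℝ) * c ^ 2 * δ - ((n : ℝ) - 1) * c * σ) /
      ((n : ℝ) - 1 + 2 * (n : ℝ) * c ^ 2))
    (hσs : σs = (((n : ℝ) - 1) * σ - (n : ℝ) * c * δ) /
      ((n : ℝ) - 1 + 2 * (n : ℝ) * c ^ 2)) :
    δs + 2 * σs * c = 0 ∧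
    (tridiag n δs σs).mulVec (evec n h) = 0 ∧
    frobNorm (tridiag n δ σ - tridiag n δs σs) =
      |δ + 2 * c * σ| / Real.sqrt (1 / (n : ℝ) + 2 * c ^ 2 / ((n : ℝ) - 1)) ∧
    frobNorm (tridiag n δ σ - tridiag n δs σs) = |lam n δ σ h| / kap n h := by
  have hn1 : (1:ℝ) ≤ (n:ℝ) - 1 := by
    have : (2:ℝ) ≤ (n:ℝ) := by exact_mod_cast hn
    linarith
  have hD : (0:ℝ) < (n : ℝ) - 1 + 2 * (n : ℝ) * c ^ 2 := by positivity
  have hDne : ((n : ℝ) - 1 + 2 * (n : ℝ) * c ^ 2) ≠ 0 := ne_of_gt hD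
  have hnpos : (0:ℝ) < (n:ℝ) := by positivity
  have hzero : δs + 2 * σs * c = 0 := by
    rw [hδs, hσs]; field_simp; ring
  have hfrob : frobNorm (tridiag n δ σ - tridiag n δs σs) =
      |δ + 2 * c * σ| / Real.sqrt (1 / (n : ℝ) + 2 * c ^ 2 / ((n : ℝ) - 1)) := by
    have hdiff : tridiag n δ σ - tridiag n δs σs = tridiag n (δ - δs) (σ - σs) := by
      ext i j
      simp only [Matrix.sub_apply, tridiag, Matrix.of_apply]
      split_ifs <;> ring
    have hsq : ∀ i j : Fin n, (tridiag n (δ - δs) (σ - σs) i j) ^ 2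
        = tridiag n ((δ - δs)^2) ((σ - σs)^2) i j := by
      intro i j
      simp only [tridiag, Matrix.of_apply]
      split_ifs <;> ring
    have hsum : ∑ i, ∑ j, (tridiag n (δ - δs) (σ - σs) i j) ^ 2
        = (n:ℝ) * (δ - δs)^2 + 2 * ((n:ℝ) - 1) * (σ - σs)^2 := by
      simp only [hsq]
      exact tridiag_sum n (by omega) _ _
    have ha : δ - δs = ((n:ℝ) - 1) * (δ + 2*c*σ) / ((n : ℝ) - 1 + 2 * (n : ℝ) * c ^ 2) := by
      rw [hδs]; field_simp; ring
    have hb : σ - σs = (n:ℝ) * c * (δ + 2*c*σ) / ((n : ℝ) - 1 + 2 * (n : ℝ) * c ^ 2) := by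
      rw [hσs]; field_simp; ring
    have hE : (1 / (n : ℝ) + 2 * c ^ 2 / ((n : ℝ) - 1))
        = ((n : ℝ) - 1 + 2 * (n : ℝ) * c ^ 2) / ((n:ℝ) * ((n:ℝ) - 1)) := by
      field_simp
    have hkey : (n:ℝ) * (δ - δs)^2 + 2 * ((n:ℝ) - 1) * (σ - σs)^2
        = (δ + 2*c*σ)^2 / (1 / (n : ℝ) + 2 * c ^ 2 / ((n : ℝ) - 1)) := by
      rw [ha, hb, hE]
      field_simp
    rw [frobNorm, hdiff, hsum, hkey, Real.sqrt_div (sq_nonneg _), Real.sqrt_sq_eq_abs]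
  refine ⟨hzero, ?_, ?_⟩
  · -- eigenvector
    set θ : ℝ := (h : ℝ) * Real.pi / ((n : ℝ) + 1) with hθ
    set u : ℕ → ℝ := fun m => Real.sqrt (2 / ((n:ℝ) + 1)) * Real.sin ((m : ℝ) * θ) with hu
    have hu0 : u 0 = 0 := by simp [hu]
    have huN : u (n + 1) = 0 := by
      have hne : ((n:ℝ) + 1) ≠ 0 := by positivity
      have harg : ((n + 1 : ℕ) : ℝ) * θ = (h : ℝ) * Real.pi := by
        rw [hθ]; push_cast; field_simp
      simp only [hu, harg]
      rw [Real.sin_nat_mul_pi, mul_zero]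
    have hrec : ∀ m : ℕ, u m + u (m + 2) = 2 * c * u (m + 1) := by
      intro m
      have e1 : ((m : ℕ) : ℝ) * θ = ((m + 1 : ℕ) : ℝ) * θ - θ := by push_cast; ring
      have e2 : ((m + 2 : ℕ) : ℝ) * θ = ((m + 1 : ℕ) : ℝ) * θ + θ := by push_cast; ring
      simp only [hu]
      rw [e1, e2, Real.sin_sub, Real.sin_add, hc]
      ring
    have hev : ∀ k : Fin n, evec n h k = u ((k : ℕ) + 1) := by
      intro k
      simp only [evec, hu]
      congr 1
      rw [hθ]; push_cast; ring
    funext i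
    show ∑ j, tridiag n δs σs i j * evec n h j = 0
    calc ∑ j, tridiag n δs σs i j * evec n h j
        = ∑ j : Fin n, ((if (i : ℕ) = (j : ℕ) then δs else 0) * u ((j:ℕ)+1)
            + (if (i : ℕ) + 1 = (j : ℕ) then σs else 0) * u ((j:ℕ)+1)
            + (if (j : ℕ) + 1 = (i : ℕ) then σs else 0) * u ((j:ℕ)+1)) := by
          refine Finset.sum_congr rfl fun j _ => ?_
          rw [tridiag_apply, hev j]; ring
      _ = δs * u ((i:ℕ)+1) + σs * u ((i:ℕ)+2) + σs * u (i : ℕ) := by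
          rw [Finset.sum_add_distrib, Finset.sum_add_distrib,
            sum_if_eq n i δs (fun j => u ((j:ℕ)+1)), sum_if_sup n i σs u huN,
            sum_if_sub n i σs u hu0]
      _ = 0 := by
          have := hrec (i : ℕ)
          have h2 : (i:ℕ) + 1 + 1 = (i:ℕ) + 2 := rfl
          linear_combination σs * (hrec (i : ℕ)) + u ((i:ℕ)+1) * hzero
  refine ⟨hfrob, ?_⟩
  have hlam : lam n δ σ h = δ + 2 * c * σ := by rw [lam, ← hc]; ring
  have hkap : kap n h = Real.sqrt (1 / (n : ℝ) + 2 * c ^ 2 / ((n : ℝ) - 1)) := by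
    rw [kap, ← hc]; congr 1; ring
  rw [hlam, hkap]; exact hfrob
end

section
/- For every h = 1,…,n, setting c = cos(hπ/(n+1)) and P_h = (n; 1/n, c/(n−1)), one has the identity T − (λ_h/κ(h)²) P_h = (n; δ*, σ*), where δ* = 2(n c² δ − (n−1) c σ)/(n−1+2n c²) and σ* = ((n−1)σ − n c δ)/(n−1+2n c²); consequently T − (λ_h/κ(h)²) P_h is the unique symmetric tridiagonal Toeplitz matrix with null h-th eigenvalue closest to T in the Frobenius norm. -/
open Real Filter

lemma tridiag_sub (n : ℕ) (a b d s : ℝ) :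
    tridiag n a b - tridiag n d s = tridiag n (a - d) (b - s) := by
  ext i j
  simp only [Matrix.sub_apply, tridiag, Matrix.of_apply]
  split_ifs <;> ring

lemma sumdiag (n : ℕ) (x : ℝ) :
    ∑ i ∈ Finset.range n, ∑ j ∈ Finset.range n, (if i = j then x else 0) = n * x := by
  have h1 : ∀ i ∈ Finset.range n, ∑ j ∈ Finset.range n, (if i = j then x else 0) = x := by
    intro i hi
    rw [Finset.sum_ite_eq]
    simp [hi]
  rw [Finset.sum_congr rfl h1, Finset.sum_const, Finset.card_range, nsmul_eq_mul]

lemma sumsup (n : ℕ) (x : ℝ) :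
    ∑ i ∈ Finset.range n, ∑ j ∈ Finset.range n, (if i + 1 = j then x else 0)
      = ((n - 1 : ℕ) : ℝ) * x := by
  have h1 : ∀ i ∈ Finset.range n, ∑ j ∈ Finset.range n, (if i + 1 = j then x else 0)
      = if i + 1 < n then x else 0 := by
    intro i _
    rw [Finset.sum_ite_eq]
    simp [Finset.mem_range]
  rw [Finset.sum_congr rfl h1]
  rcases n with _ | m
  · simp
  · rw [Finset.sum_range_succ, if_neg (by omega)]
    have h2 : ∀ i ∈ Finset.range m, (if i + 1 < m + 1 then x else 0) = x := by
      intro i hi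
      rw [if_pos (by exact Nat.succ_lt_succ (Finset.mem_range.mp hi))]
    rw [Finset.sum_congr rfl h2, Finset.sum_const, Finset.card_range, nsmul_eq_mul]
    simp

lemma sumsub (n : ℕ) (x : ℝ) :
    ∑ i ∈ Finset.range n, ∑ j ∈ Finset.range n, (if j + 1 = i then x else 0)
      = ((n - 1 : ℕ) : ℝ) * x := by
  rw [Finset.sum_comm]
  exact sumsup n x

lemma tridiag_sum_sq (n : ℕ) (a b : ℝ) :
    ∑ i, ∑ j, (tridiag n a b) i j ^ 2
      = (n : ℝ) * a ^ 2 + 2 * ((n - 1 : ℕ) : ℝ) * b ^ 2 := by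
  have key : ∀ i j : Fin n, (tridiag n a b) i j ^ 2 =
      (if (i : ℕ) = (j : ℕ) then a ^ 2 else 0) +
      ((if (i : ℕ) + 1 = (j : ℕ) then b ^ 2 else 0) +
        (if (j : ℕ) + 1 = (i : ℕ) then b ^ 2 else 0)) := by
    intro i j
    simp only [tridiag, Matrix.of_apply]
    split_ifs
    all_goals try ring
    all_goals (exfalso; omega)
  have conv : ∀ g : ℕ → ℕ → ℝ, (∑ i : Fin n, ∑ j : Fin n, g i j)
      = ∑ i ∈ Finset.range n, ∑ j ∈ Finset.range n, g i j := by
    intro g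
    rw [Fin.sum_univ_eq_sum_range (fun i => ∑ j : Fin n, g i j)]
    exact Finset.sum_congr rfl fun i _ => Fin.sum_univ_eq_sum_range (fun j => g i j) n
  calc ∑ i, ∑ j, (tridiag n a b) i j ^ 2
      = ∑ i : Fin n, ∑ j : Fin n,
          ((if (i : ℕ) = (j : ℕ) then a ^ 2 else 0) +
          ((if (i : ℕ) + 1 = (j : ℕ) then b ^ 2 else 0) +
            (if (j : ℕ) + 1 = (i : ℕ) then b ^ 2 else 0))) :=
        Finset.sum_congr rfl fun i _ => Finset.sum_congr rfl fun j _ => key i j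
    _ = ∑ i ∈ Finset.range n, ∑ j ∈ Finset.range n,
          ((if i = j then a ^ 2 else 0) +
          ((if i + 1 = j then b ^ 2 else 0) + (if j + 1 = i then b ^ 2 else 0))) :=
        conv (fun i j => (if i = j then a ^ 2 else 0) +
          ((if i + 1 = j then b ^ 2 else 0) + (if j + 1 = i then b ^ 2 else 0)))
    _ = (n : ℝ) * a ^ 2 + 2 * ((n - 1 : ℕ) : ℝ) * b ^ 2 := by
        simp only [Finset.sum_add_distrib]
        rw [sumdiag, sumsup, sumsub]
        ring

lemma frob_tridiag (n : ℕ) (hn : 2 ≤ n) (a b : ℝ) :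
    frobNorm (tridiag n a b)
      = Real.sqrt ((n : ℝ) * a ^ 2 + 2 * ((n : ℝ) - 1) * b ^ 2) := by
  rw [frobNorm, tridiag_sum_sq]
  congr 1
  have : ((n - 1 : ℕ) : ℝ) = (n : ℝ) - 1 := by
    have : 1 ≤ n := by omega
    push_cast [this]
    ring
  rw [this]

set_option maxHeartbeats 1000000 in
/-- the identity `T − (λ_h/κ(h)²) P_h = (n; δ*, σ*)` holds; consequently this matrix
is the unique symmetric tridiagonal Toeplitz matrix with null `h`-th eigenvalue closest to `T`
in the Frobenius norm. -/
theorem stmt_6 (n : ℕ) (hn : 2 ≤ n) (δ σ : ℝ) (h : ℕ) (h1 : 1 ≤ h) (hh : h ≤ n)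
    (c δs σs : ℝ) (hc : c = Real.cos (h * Real.pi / (n + 1)))
    (hδs : δs = 2 * ((n : ℝ) * c ^ 2 * δ - ((n : ℝ) - 1) * c * σ) /
      ((n : ℝ) - 1 + 2 * (n : ℝ) * c ^ 2))
    (hσs : σs = (((n : ℝ) - 1) * σ - (n : ℝ) * c * δ) /
      ((n : ℝ) - 1 + 2 * (n : ℝ) * c ^ 2))
    (M : Matrix (Fin n) (Fin n) ℝ)
    (hM : M = tridiag n δ σ -
      (lam n δ σ h / kap n h ^ 2) • tridiag n (1 / (n : ℝ)) (c / ((n : ℝ) - 1))) :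
    M = tridiag n δs σs ∧
    δs + 2 * σs * c = 0 ∧
    (∀ d s : ℝ, d + 2 * s * c = 0 →
      frobNorm (tridiag n δ σ - M) ≤ frobNorm (tridiag n δ σ - tridiag n d s) ∧
      (frobNorm (tridiag n δ σ - tridiag n d s) = frobNorm (tridiag n δ σ - M) →
        tridiag n d s = M)) := by
  have hn2 : (2 : ℝ) ≤ (n : ℝ) := by exact_mod_cast hn
  have hn0 : (n : ℝ) ≠ 0 := by linarith
  have hn1 : (n : ℝ) - 1 ≠ 0 := by linarith
  have hn1' : (0 : ℝ) < (n : ℝ) - 1 := by linarith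
  have hD : (0 : ℝ) < (n : ℝ) - 1 + 2 * (n : ℝ) * c ^ 2 := by nlinarith [sq_nonneg c]
  have hD0 : ((n : ℝ) - 1 + 2 * (n : ℝ) * c ^ 2) ≠ 0 := ne_of_gt hD
  have hk2 : kap n h ^ 2 = 1 / (n : ℝ) + 2 / ((n : ℝ) - 1) * c ^ 2 := by
    rw [kap, ← hc]
    apply Real.sq_sqrt
    have h1 : (0 : ℝ) ≤ 1 / (n : ℝ) := by positivity
    have h2 : (0 : ℝ) ≤ 2 / ((n : ℝ) - 1) * c ^ 2 := by
      apply mul_nonneg (by positivity) (sq_nonneg c)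
    linarith
  have hk0 : (1 / (n : ℝ) + 2 / ((n : ℝ) - 1) * c ^ 2) ≠ 0 := by
    have : 1 / (n : ℝ) + 2 / ((n : ℝ) - 1) * c ^ 2
        = ((n : ℝ) - 1 + 2 * (n : ℝ) * c ^ 2) / ((n : ℝ) * ((n : ℝ) - 1)) := by
      field_simp
    rw [this]
    positivity
  have hlam : lam n δ σ h = δ + 2 * σ * c := by rw [lam, ← hc]
  -- Part 1
  have hM' : M = tridiag n δs σs := by
    rw [hM]
    ext i j
    simp only [Matrix.sub_apply, Matrix.smul_apply, smul_eq_mul, tridiag, Matrix.of_apply]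
    split_ifs
    · rw [hk2, hlam, hδs]
      field_simp
      ring
    · rw [hk2, hlam, hσs]
      field_simp
      ring
    · ring
  -- Part 2
  have hzero : δs + 2 * σs * c = 0 := by
    rw [hδs, hσs]
    field_simp
    ring
  refine ⟨hM', hzero, ?_⟩
  intro d s hds
  rw [hM', tridiag_sub, tridiag_sub]
  have hw0 : (n : ℝ) * c * (δ - δs) - ((n : ℝ) - 1) * (σ - σs) = 0 := by
    rw [hδs, hσs]
    field_simp
    ring
  have hA : ((n : ℝ) * (δ - δs) ^ 2 + 2 * ((n : ℝ) - 1) * (σ - σs) ^ 2) * ((n : ℝ) - 1 + 2 * (n : ℝ) * c ^ 2) = (n : ℝ) * ((n : ℝ) - 1) * (δ + 2 * σ * c) ^ 2 := by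
    have hcon : (δ - δs) + 2 * (σ - σs) * c = δ + 2 * σ * c := by
      linear_combination -hzero
    linear_combination
      ((n : ℝ) * ((n : ℝ) - 1) * ((δ - δs) + 2 * (σ - σs) * c + (δ + 2 * σ * c))) * hcon +
      (2 * ((n : ℝ) * c * (δ - δs) - ((n : ℝ) - 1) * (σ - σs))) * hw0
  have hB : ((n : ℝ) * (δ - d) ^ 2 + 2 * ((n : ℝ) - 1) * (σ - s) ^ 2) * ((n : ℝ) - 1 + 2 * (n : ℝ) * c ^ 2) = (n : ℝ) * ((n : ℝ) - 1) * (δ + 2 * σ * c) ^ 2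
      + 2 * ((n : ℝ) * c * (δ - d) - ((n : ℝ) - 1) * (σ - s)) ^ 2 := by
    linear_combination
      (-(n : ℝ) * ((n : ℝ) - 1) * ((δ - d) + 2 * (σ - s) * c + (δ + 2 * σ * c))) * hds
  have hAB : ((n : ℝ) * (δ - δs) ^ 2 + 2 * ((n : ℝ) - 1) * (σ - σs) ^ 2)
      ≤ ((n : ℝ) * (δ - d) ^ 2 + 2 * ((n : ℝ) - 1) * (σ - s) ^ 2) := by
    have hADBD : ((n : ℝ) * (δ - δs) ^ 2 + 2 * ((n : ℝ) - 1) * (σ - σs) ^ 2) * ((n : ℝ) - 1 + 2 * (n : ℝ) * c ^ 2)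
        ≤ ((n : ℝ) * (δ - d) ^ 2 + 2 * ((n : ℝ) - 1) * (σ - s) ^ 2) * ((n : ℝ) - 1 + 2 * (n : ℝ) * c ^ 2) := by
      rw [hA, hB]
      nlinarith [sq_nonneg ((n : ℝ) * c * (δ - d) - ((n : ℝ) - 1) * (σ - s))]
    exact le_of_mul_le_mul_right hADBD hD
  have hA0 : (0 : ℝ) ≤ ((n : ℝ) * (δ - δs) ^ 2 + 2 * ((n : ℝ) - 1) * (σ - σs) ^ 2) := by
    have := sq_nonneg (δ - δs)
    have := sq_nonneg (σ - σs)
    nlinarith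
  have hB0 : (0 : ℝ) ≤ ((n : ℝ) * (δ - d) ^ 2 + 2 * ((n : ℝ) - 1) * (σ - s) ^ 2) := by
    have := sq_nonneg (δ - d)
    have := sq_nonneg (σ - s)
    nlinarith
  constructor
  · rw [frob_tridiag n hn, frob_tridiag n hn]
    exact Real.sqrt_le_sqrt hAB
  · intro heq
    rw [frob_tridiag n hn, frob_tridiag n hn] at heq
    have hBA : ((n : ℝ) * (δ - d) ^ 2 + 2 * ((n : ℝ) - 1) * (σ - s) ^ 2)
        = ((n : ℝ) * (δ - δs) ^ 2 + 2 * ((n : ℝ) - 1) * (σ - σs) ^ 2) := by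
      calc ((n : ℝ) * (δ - d) ^ 2 + 2 * ((n : ℝ) - 1) * (σ - s) ^ 2)
          = Real.sqrt ((n : ℝ) * (δ - d) ^ 2 + 2 * ((n : ℝ) - 1) * (σ - s) ^ 2) ^ 2 :=
            (Real.sq_sqrt hB0).symm
        _ = Real.sqrt ((n : ℝ) * (δ - δs) ^ 2 + 2 * ((n : ℝ) - 1) * (σ - σs) ^ 2) ^ 2 := by
            rw [heq]
        _ = _ := Real.sq_sqrt hA0
    have hwsq : ((n : ℝ) * c * (δ - d) - ((n : ℝ) - 1) * (σ - s)) ^ 2 = 0 := by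
      have hADBD : ((n : ℝ) * (δ - δs) ^ 2 + 2 * ((n : ℝ) - 1) * (σ - σs) ^ 2) * ((n : ℝ) - 1 + 2 * (n : ℝ) * c ^ 2)
          = ((n : ℝ) * (δ - d) ^ 2 + 2 * ((n : ℝ) - 1) * (σ - s) ^ 2) * ((n : ℝ) - 1 + 2 * (n : ℝ) * c ^ 2) := by
        rw [hBA]
      rw [hA, hB] at hADBD
      linarith
    have hw : (n : ℝ) * c * (δ - d) - ((n : ℝ) - 1) * (σ - s) = 0 :=
      pow_eq_zero_iff (by norm_num) |>.mp hwsq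
    have hs : s = σs := by
      rw [hσs]
      rw [eq_div_iff hD0]
      linear_combination hw + ((n : ℝ) * c) * hds
    have hd : d = δs := by
      rw [hδs]
      rw [eq_div_iff hD0]
      linear_combination (-2 * c) * hw + ((n : ℝ) - 1) * hds
    rw [hs, hd]
end

section
/- Suppose σ ≠ 0 and |δ| > 2|σ| cos(π/(n+1)) (equivalently, T is positive definite or negative definite). Then there exists k ∈ {1, n} such that for every h ≠ k one has both |λ_k| < |λ_h| and |λ_k|/κ(k) < |λ_h|/κ(h); that is, the same extremal eigenvalue is the unique eigenvalue of smallest magnitude and the unique minimizer of the ratio |λ_h|/κ(h). -/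
open Real Filter

/-- if `σ ≠ 0` and `|δ| > 2|σ|cos(π/(n+1))` (i.e. `T` is positive or negative
definite), then there is `k ∈ {1, n}` which is simultaneously the unique index of smallest
`|λ_k|` and the unique minimizer of `|λ_k|/κ(k)`. -/
theorem stmt_11 (n : ℕ) (hn : 2 ≤ n) (δ σ : ℝ) (hσ : σ ≠ 0)
    (hdef : 2 * |σ| * Real.cos (Real.pi / (n + 1)) < |δ|) :
    ∃ k : ℕ, (k = 1 ∨ k = n) ∧
      ∀ h : ℕ, 1 ≤ h → h ≤ n → h ≠ k →
        |lam n δ σ k| < |lam n δ σ h| ∧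
        |lam n δ σ k| / kap n k < |lam n δ σ h| / kap n h := by
  have hπ := Real.pi_pos
  have hn1 : 1 ≤ n := le_trans (by norm_num) hn
  have hnr : (2:ℝ) ≤ (n:ℝ) := by exact_mod_cast hn
  have hNpos : (0:ℝ) < (n:ℝ) + 1 := by positivity
  set θ : ℕ → ℝ := fun h => (h:ℝ) * Real.pi / ((n:ℝ) + 1) with hθ
  have hmem : ∀ h : ℕ, h ≤ n → θ h ∈ Set.Icc 0 Real.pi := by
    intro h hh
    have hhr : (h:ℝ) ≤ n := by exact_mod_cast hh
    constructor
    · positivity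
    · rw [div_le_iff₀ hNpos]
      nlinarith
  have hmono : ∀ a b : ℕ, a < b → b ≤ n → θ a < θ b := by
    intro a b hab hb
    have : (a:ℝ) < b := by exact_mod_cast hab
    simp only [hθ]
    gcongr
  have hcos_lt : ∀ a b, a < b → b ≤ n → Real.cos (θ b) < Real.cos (θ a) := by
    intro a b hab hb
    exact Real.strictAntiOn_cos (hmem a (le_of_lt (lt_of_lt_of_le hab hb)))
      (hmem b hb) (hmono a b hab hb)
  have hθn : θ n = Real.pi - θ 1 := by
    simp only [hθ]
    push_cast
    field_simp
    ring
  have hcosn : Real.cos (θ n) = - Real.cos (θ 1) := by rw [hθn, Real.cos_pi_sub]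
  have hc1 : 0 ≤ Real.cos (θ 1) := by
    apply Real.cos_nonneg_of_mem_Icc
    constructor
    · have := (hmem 1 hn1).1; linarith
    · simp only [hθ]
      rw [div_le_iff₀ hNpos]
      push_cast
      nlinarith
  have hle : ∀ h, 1 ≤ h → h ≤ n → Real.cos (θ h) ≤ Real.cos (θ 1) := by
    intro h h1 h2
    rcases eq_or_lt_of_le h1 with hE | hlt
    · rw [← hE]
    · exact (hcos_lt 1 h hlt h2).le
  have hge : ∀ h, 1 ≤ h → h ≤ n → - Real.cos (θ 1) ≤ Real.cos (θ h) := by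
    intro h h1 h2
    rw [← hcosn]
    rcases eq_or_lt_of_le h2 with hE | hlt
    · rw [hE]
    · exact (hcos_lt h n hlt le_rfl).le
  have habs : ∀ h, 1 ≤ h → h ≤ n → |Real.cos (θ h)| ≤ Real.cos (θ 1) := by
    intro h h1 h2
    exact abs_le.2 ⟨hge h h1 h2, hle h h1 h2⟩
  have hθ1 : θ 1 = Real.pi / ((n:ℝ) + 1) := by simp [hθ]
  have hdef' : 2 * |σ| * Real.cos (θ 1) < |δ| := by rw [hθ1]; exact hdef
  have hδ0 : δ ≠ 0 := by
    intro h
    rw [h, abs_zero] at hdef'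
    nlinarith [abs_nonneg σ]
  set s : ℝ := if 0 < δ then 1 else -1 with hs
  have hlamθ : ∀ h : ℕ, lam n δ σ h = δ + 2 * σ * Real.cos (θ h) := by
    intro h; rfl
  have habslam : ∀ h, 1 ≤ h → h ≤ n →
      |lam n δ σ h| = |δ| + s * (2 * σ * Real.cos (θ h)) := by
    intro h h1 h2
    have hb : |2 * σ * Real.cos (θ h)| < |δ| := by
      have h3 := habs h h1 h2
      have : |2 * σ * Real.cos (θ h)| = 2 * |σ| * |Real.cos (θ h)| := by
        rw [abs_mul, abs_mul]; norm_num
      rw [this]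
      nlinarith [abs_nonneg σ]
    rw [hlamθ h]
    rcases abs_lt.mp hb with ⟨hb1, hb2⟩
    rw [hs]
    split_ifs with hδ
    · rw [abs_of_pos hδ] at hb1 hb2 ⊢
      rw [abs_of_pos (by linarith)]
      ring
    · have hδneg : δ < 0 := lt_of_le_of_ne (not_lt.mp hδ) hδ0
      rw [abs_of_neg hδneg] at hb1 hb2 ⊢
      rw [abs_of_neg (by linarith)]
      ring
  have hs1 : s = 1 ∨ s = -1 := by rw [hs]; split_ifs <;> simp
  have hsσ : s * σ ≠ 0 := by
    rcases hs1 with h | h <;> rw [h] <;> simpa using hσ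
  -- kap facts
  have hkapθ : ∀ h : ℕ, kap n h =
      Real.sqrt (1 / (n:ℝ) + 2 / ((n:ℝ) - 1) * Real.cos (θ h) ^ 2) := by
    intro h; rfl
  have hkap_pos : ∀ h : ℕ, 0 < kap n h := by
    intro h
    rw [hkapθ h]
    apply Real.sqrt_pos.2
    have h1 : (0:ℝ) < 1 / (n:ℝ) := by positivity
    have h2 : (0:ℝ) ≤ 2 / ((n:ℝ) - 1) * Real.cos (θ h) ^ 2 := by
      apply mul_nonneg
      · apply div_nonneg (by norm_num); linarith
      · positivity
    linarith
  have hkap_le : ∀ h, 1 ≤ h → h ≤ n → ∀ k : ℕ,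
      Real.cos (θ k) ^ 2 = Real.cos (θ 1) ^ 2 → kap n h ≤ kap n k := by
    intro h h1 h2 k hk
    rw [hkapθ h, hkapθ k, hk]
    apply Real.sqrt_le_sqrt
    have hsq : Real.cos (θ h) ^ 2 ≤ Real.cos (θ 1) ^ 2 :=
      sq_le_sq' (hge h h1 h2) (hle h h1 h2)
    have h2' : (0:ℝ) ≤ 2 / ((n:ℝ) - 1) := by
      apply div_nonneg (by norm_num); linarith
    nlinarith
  rcases hsσ.lt_or_gt with hneg | hpos
  · -- s*σ < 0, take k = 1
    refine ⟨1, Or.inl rfl, ?_⟩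
    intro h h1 h2 hne
    have h1lt : 1 < h := lt_of_le_of_ne h1 (Ne.symm hne)
    have hc : Real.cos (θ h) < Real.cos (θ 1) := hcos_lt 1 h h1lt h2
    have key : |lam n δ σ 1| < |lam n δ σ h| := by
      rw [habslam 1 le_rfl hn1, habslam h h1 h2]
      nlinarith
    refine ⟨key, ?_⟩
    have hk : kap n h ≤ kap n 1 := hkap_le h h1 h2 1 rfl
    calc |lam n δ σ 1| / kap n 1 ≤ |lam n δ σ 1| / kap n h := by
          apply div_le_div_of_nonneg_left (abs_nonneg _) (hkap_pos h) hk
      _ < |lam n δ σ h| / kap n h := by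
          apply div_lt_div_of_pos_right key (hkap_pos h)
  · -- 0 < s*σ, take k = n
    refine ⟨n, Or.inr rfl, ?_⟩
    intro h h1 h2 hne
    have hlt : h < n := lt_of_le_of_ne h2 hne
    have hc : Real.cos (θ n) < Real.cos (θ h) := hcos_lt h n hlt le_rfl
    have key : |lam n δ σ n| < |lam n δ σ h| := by
      rw [habslam n hn1 le_rfl, habslam h h1 h2]
      nlinarith
    refine ⟨key, ?_⟩
    have hk : kap n h ≤ kap n n :=
      hkap_le h h1 h2 n (by rw [hcosn]; ring)
    calc |lam n δ σ n| / kap n n ≤ |lam n δ σ n| / kap n h := by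
          apply div_le_div_of_nonneg_left (abs_nonneg _) (hkap_pos h) hk
      _ < |lam n δ σ h| / kap n h := by
          apply div_lt_div_of_pos_right key (hkap_pos h)
end

section
/- Let T = (n; δ, σ) with σ ≠ 0 be positive definite, and let R ∈ ℝ^{n×n} be upper triangular with positive diagonal entries such that RᵀR = T (the Cholesky factor). Then R is upper bidiagonal (R_{ij} = 0 whenever j > i+1), its diagonal entries satisfy r_{i−1,i−1} ≥ r_{i,i} > 0 for i = 2,…,n, every superdiagonal entry r_{i,i+1} has the same sign as σ, and |r_{i−1,i}| ≤ |r_{i,i+1}| for i = 2,…,n−1. -/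
open Real Filter

/-- the Cholesky factor `R` of a positive definite `T = (n; δ, σ)`, `σ ≠ 0`, is
upper bidiagonal; its diagonal entries are positive and nonincreasing, its superdiagonal entries
have the same sign as `σ`, and their absolute values are nondecreasing. -/
theorem stmt_13 (n : ℕ) (hn : 2 ≤ n) (δ σ : ℝ) (hσ : σ ≠ 0)
    (hposdef : (tridiag n δ σ).PosDef)
    (R : Matrix (Fin n) (Fin n) ℝ)
    (hupper : ∀ i j : Fin n, (j : ℕ) < (i : ℕ) → R i j = 0)
    (hdiagpos : ∀ i : Fin n, 0 < R i i)
    (hfact : R.transpose * R = tridiag n δ σ) :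
    (∀ i j : Fin n, (i : ℕ) + 1 < (j : ℕ) → R i j = 0) ∧
    (∀ (j : ℕ) (hj : j + 1 < n),
      R ⟨j + 1, hj⟩ ⟨j + 1, hj⟩ ≤ R ⟨j, by omega⟩ ⟨j, by omega⟩ ∧
      0 < R ⟨j + 1, hj⟩ ⟨j + 1, hj⟩) ∧
    (∀ (j : ℕ) (hj : j + 1 < n),
      0 < σ * R ⟨j, by omega⟩ ⟨j + 1, hj⟩) ∧
    (∀ (j : ℕ) (hj : j + 2 < n),
      |R ⟨j, by omega⟩ ⟨j + 1, by omega⟩| ≤ |R ⟨j + 1, by omega⟩ ⟨j + 2, hj⟩|) := by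
  -- the basic factorization equations
  have key : ∀ i j : Fin n, ∑ k, R k i * R k j = tridiag n δ σ i j := by
    intro i j
    have h := congrFun (congrFun hfact i) j
    simpa [Matrix.mul_apply, Matrix.transpose_apply] using h
  -- R is upper bidiagonal
  have single : ∀ i j : Fin n, (∀ k : Fin n, (k : ℕ) < (i : ℕ) → R k j = 0) →
      (i : ℕ) + 1 < (j : ℕ) → R i j = 0 := by
    intro i j hk hij
    have hsum := key i j
    have h0 : tridiag n δ σ i j = 0 := by
      simp only [tridiag, Matrix.of_apply]
      rw [if_neg (by omega), if_neg (by omega)]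
    rw [h0] at hsum
    have hs : ∑ k, R k i * R k j = R i i * R i j := by
      apply Finset.sum_eq_single
      · intro k _ hne
        have hne' : (k : ℕ) ≠ (i : ℕ) := fun h => hne (Fin.ext h)
        rcases lt_or_gt_of_ne hne' with h | h
        · rw [hk k h, mul_zero]
        · rw [hupper k i h, zero_mul]
      · intro h; exact absurd (Finset.mem_univ i) h
    rw [hs] at hsum
    rcases mul_eq_zero.mp hsum with h | h
    · exact absurd h (ne_of_gt (hdiagpos i))
    · exact h
  have hbid : ∀ i j : Fin n, (i : ℕ) + 1 < (j : ℕ) → R i j = 0 := by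
    have H : ∀ m : ℕ, ∀ i j : Fin n, (i : ℕ) < m → (i : ℕ) + 1 < (j : ℕ) → R i j = 0 := by
      intro m
      induction m with
      | zero => intro i j hi; omega
      | succ m IH =>
        intro i j hi hij
        exact single i j (fun k hk => IH k j (by omega) (by omega)) hij
    intro i j h; exact H ((i : ℕ) + 1) i j (by omega) h
  -- diagonal equation at 0 : a₀² = δ
  have hD0 : R ⟨0, by omega⟩ ⟨0, by omega⟩ ^ 2 = δ := by
    set i0 : Fin n := ⟨0, by omega⟩
    have hsum := key i0 i0
    have h0 : tridiag n δ σ i0 i0 = δ := by simp [tridiag]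
    rw [h0] at hsum
    have hs : ∑ k, R k i0 * R k i0 = R i0 i0 * R i0 i0 := by
      apply Finset.sum_eq_single
      · intro k _ hne
        have hne' : (k : ℕ) ≠ (i0 : ℕ) := fun h => hne (Fin.ext h)
        have : (i0 : ℕ) < (k : ℕ) := by simp only [i0] at hne' ⊢; omega
        rw [hupper k i0 this, zero_mul]
      · intro h; exact absurd (Finset.mem_univ i0) h
    rw [hs] at hsum
    rw [sq]; exact hsum
  -- diagonal equation: bⱼ² + aⱼ₊₁² = δ
  have hD : ∀ (j : ℕ) (hj : j + 1 < n),
      R ⟨j, by omega⟩ ⟨j + 1, hj⟩ ^ 2 + R ⟨j + 1, hj⟩ ⟨j + 1, hj⟩ ^ 2 = δ := by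
    intro j hj
    set i0 : Fin n := ⟨j, by omega⟩
    set i1 : Fin n := ⟨j + 1, hj⟩
    have hsum := key i1 i1
    have h0 : tridiag n δ σ i1 i1 = δ := by simp [tridiag]
    rw [h0] at hsum
    have hne : i0 ≠ i1 := by simp [i0, i1, Fin.ext_iff]
    have hs : ∑ k, R k i1 * R k i1 = R i0 i1 * R i0 i1 + R i1 i1 * R i1 i1 := by
      have h1 : ∑ k ∈ ({i0, i1} : Finset (Fin n)), R k i1 * R k i1 =
          ∑ k, R k i1 * R k i1 := by
        apply Finset.sum_subset (Finset.subset_univ _)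
        intro k _ hk
        simp only [Finset.mem_insert, Finset.mem_singleton] at hk
        push_neg at hk
        obtain ⟨ha, hb⟩ := hk
        have ha' : (k : ℕ) ≠ j := fun h => ha (Fin.ext h)
        have hb' : (k : ℕ) ≠ j + 1 := fun h => hb (Fin.ext h)
        rcases lt_or_gt_of_ne hb' with h | h
        · rw [hbid k i1 (by simp only [i1]; omega), mul_zero]
        · rw [hupper k i1 (by simp only [i1]; omega), zero_mul]
      rw [← h1, Finset.sum_pair hne]
    rw [hs] at hsum
    rw [sq, sq]; exact hsum
  -- superdiagonal equation: aⱼ bⱼ = σ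
  have hS : ∀ (j : ℕ) (hj : j + 1 < n),
      R ⟨j, by omega⟩ ⟨j, by omega⟩ * R ⟨j, by omega⟩ ⟨j + 1, hj⟩ = σ := by
    intro j hj
    set i0 : Fin n := ⟨j, by omega⟩
    set i1 : Fin n := ⟨j + 1, hj⟩
    have hsum := key i0 i1
    have h0 : tridiag n δ σ i0 i1 = σ := by
      simp only [tridiag, Matrix.of_apply]
      rw [if_neg (by simp [i0, i1]), if_pos (by simp [i0, i1])]
    rw [h0] at hsum
    have hs : ∑ k, R k i0 * R k i1 = R i0 i0 * R i0 i1 := by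
      apply Finset.sum_eq_single
      · intro k _ hne
        have hne' : (k : ℕ) ≠ (i0 : ℕ) := fun h => hne (Fin.ext h)
        rcases lt_or_gt_of_ne hne' with h | h
        · rw [hbid k i1 (by simp only [i0] at h; simp only [i1]; omega), mul_zero]
        · rw [hupper k i0 h, zero_mul]
      · intro h; exact absurd (Finset.mem_univ i0) h
    rw [hs] at hsum
    exact hsum
  -- monotonicity of the diagonal
  have mono : ∀ (j : ℕ) (hj : j + 1 < n),
      R ⟨j + 1, hj⟩ ⟨j + 1, hj⟩ ≤ R ⟨j, by omega⟩ ⟨j, by omega⟩ := by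
    intro j
    induction j with
    | zero =>
      intro hj
      have h1 := hD 0 hj
      have p0 := hdiagpos ⟨0, by omega⟩
      have p1 := hdiagpos ⟨0 + 1, hj⟩
      nlinarith [sq_nonneg (R ⟨0, by omega⟩ ⟨0 + 1, hj⟩), hD0]
    | succ m IH =>
      intro hj
      have hm : m + 1 < n := by omega
      have IH' := IH hm
      have hDm := hD m hm
      have hDm1 := hD (m + 1) hj
      have hSm := hS m hm
      have hSm1 := hS (m + 1) hj
      have pm := hdiagpos ⟨m, by omega⟩
      have pm1 := hdiagpos ⟨m + 1, hm⟩
      have pm2 := hdiagpos ⟨m + 1 + 1, hj⟩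
      have e1 : R ⟨m, by omega⟩ ⟨m, by omega⟩ ^ 2 * R ⟨m, by omega⟩ ⟨m + 1, hm⟩ ^ 2 = σ ^ 2 := by
        rw [← hSm]; ring
      have e2 : R ⟨m + 1, by omega⟩ ⟨m + 1, by omega⟩ ^ 2 *
          R ⟨m + 1, by omega⟩ ⟨m + 1 + 1, hj⟩ ^ 2 = σ ^ 2 := by
        rw [← hSm1]; ring
      have hA2 : R ⟨m + 1, by omega⟩ ⟨m + 1, by omega⟩ ^ 2 ≤
          R ⟨m, by omega⟩ ⟨m, by omega⟩ ^ 2 := by nlinarith [IH', pm, pm1]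
      have key2 : R ⟨m + 1, by omega⟩ ⟨m + 1, by omega⟩ ^ 2 * R ⟨m, by omega⟩ ⟨m + 1, hm⟩ ^ 2 ≤
          R ⟨m, by omega⟩ ⟨m, by omega⟩ ^ 2 * R ⟨m, by omega⟩ ⟨m + 1, hm⟩ ^ 2 :=
        mul_le_mul_of_nonneg_right hA2 (sq_nonneg _)
      have key3 : R ⟨m + 1, by omega⟩ ⟨m + 1, by omega⟩ ^ 2 * R ⟨m, by omega⟩ ⟨m + 1, hm⟩ ^ 2 ≤
          R ⟨m + 1, by omega⟩ ⟨m + 1, by omega⟩ ^ 2 *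
            R ⟨m + 1, by omega⟩ ⟨m + 1 + 1, hj⟩ ^ 2 := by linarith
      have hb2 : R ⟨m, by omega⟩ ⟨m + 1, hm⟩ ^ 2 ≤
          R ⟨m + 1, by omega⟩ ⟨m + 1 + 1, hj⟩ ^ 2 :=
        le_of_mul_le_mul_left key3 (pow_pos pm1 2)
      nlinarith
  -- squares of superdiagonal entries are nondecreasing
  have hb2all : ∀ (j : ℕ) (hj : j + 2 < n),
      R ⟨j, by omega⟩ ⟨j + 1, by omega⟩ ^ 2 ≤ R ⟨j + 1, by omega⟩ ⟨j + 2, hj⟩ ^ 2 := by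
    intro j hj
    have hj1 : j + 1 < n := by omega
    have hmono := mono j hj1
    have hSj := hS j hj1
    have hSj1 := hS (j + 1) (show j + 1 + 1 < n by omega)
    have pj := hdiagpos ⟨j, by omega⟩
    have pj1 := hdiagpos ⟨j + 1, by omega⟩
    have e1 : R ⟨j, by omega⟩ ⟨j, by omega⟩ ^ 2 * R ⟨j, by omega⟩ ⟨j + 1, hj1⟩ ^ 2 = σ ^ 2 := by
      rw [← hSj]; ring
    have e2 : R ⟨j + 1, by omega⟩ ⟨j + 1, by omega⟩ ^ 2 *
        R ⟨j + 1, by omega⟩ ⟨j + 1 + 1, by omega⟩ ^ 2 = σ ^ 2 := by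
      rw [← hSj1]; ring
    have hA2 : R ⟨j + 1, by omega⟩ ⟨j + 1, by omega⟩ ^ 2 ≤
        R ⟨j, by omega⟩ ⟨j, by omega⟩ ^ 2 := by nlinarith [hmono, pj, pj1]
    have key2 : R ⟨j + 1, by omega⟩ ⟨j + 1, by omega⟩ ^ 2 * R ⟨j, by omega⟩ ⟨j + 1, hj1⟩ ^ 2 ≤
        R ⟨j, by omega⟩ ⟨j, by omega⟩ ^ 2 * R ⟨j, by omega⟩ ⟨j + 1, hj1⟩ ^ 2 :=
      mul_le_mul_of_nonneg_right hA2 (sq_nonneg _)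
    have key3 : R ⟨j + 1, by omega⟩ ⟨j + 1, by omega⟩ ^ 2 * R ⟨j, by omega⟩ ⟨j + 1, hj1⟩ ^ 2 ≤
        R ⟨j + 1, by omega⟩ ⟨j + 1, by omega⟩ ^ 2 *
          R ⟨j + 1, by omega⟩ ⟨j + 1 + 1, by omega⟩ ^ 2 := by linarith
    have : R ⟨j, by omega⟩ ⟨j + 1, hj1⟩ ^ 2 ≤
        R ⟨j + 1, by omega⟩ ⟨j + 1 + 1, by omega⟩ ^ 2 :=
      le_of_mul_le_mul_left key3 (pow_pos pj1 2)
    convert this using 3 <;> omega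
  refine ⟨hbid, ?_, ?_, ?_⟩
  · intro j hj
    exact ⟨mono j hj, hdiagpos ⟨j + 1, hj⟩⟩
  · intro j hj
    have hSj := hS j hj
    have hbne : R ⟨j, by omega⟩ ⟨j + 1, hj⟩ ≠ 0 := by
      intro h
      exact hσ (by rw [← hSj, h, mul_zero])
    have hexp : σ * R ⟨j, by omega⟩ ⟨j + 1, hj⟩ =
        R ⟨j, by omega⟩ ⟨j, by omega⟩ * R ⟨j, by omega⟩ ⟨j + 1, hj⟩ ^ 2 := by
      rw [← hSj]; ring
    rw [hexp]
    exact mul_pos (hdiagpos _)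
      (lt_of_le_of_ne (sq_nonneg _) (Ne.symm (pow_ne_zero 2 hbne)))
  · intro j hj
    have h := hb2all j hj
    nlinarith [abs_nonneg (R ⟨j, by omega⟩ ⟨j + 1, by omega⟩),
      abs_nonneg (R ⟨j + 1, by omega⟩ ⟨j + 2, hj⟩),
      sq_abs (R ⟨j, by omega⟩ ⟨j + 1, by omega⟩),
      sq_abs (R ⟨j + 1, by omega⟩ ⟨j + 2, hj⟩)]
end

section
/- Suppose δ = 0 and σ ≠ 0, so that λ_h = 2σ cos(hπ/(n+1)). Then for all indices k, h ∈ {1,…,n}: if |λ_k| ≤ |λ_h| then |λ_k|/κ(k) ≤ |λ_h|/κ(h), with equality if and only if |λ_k| = |λ_h|; that is, the ratio |λ_h|/κ(h) is a strictly increasing function of |λ_h|. -/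
open Real Filter

lemma aux18 (a b x y : ℝ) (ha : 0 < a) (hb : 0 ≤ b) (hx : 0 ≤ x) (hy : 0 ≤ y)
    (hxy : x ≤ y) :
    x / Real.sqrt (a + b * x ^ 2) ≤ y / Real.sqrt (a + b * y ^ 2) ∧
    (x / Real.sqrt (a + b * x ^ 2) = y / Real.sqrt (a + b * y ^ 2) ↔ x = y) := by
  have hA : 0 < a + b * x ^ 2 := by nlinarith
  have hB : 0 < a + b * y ^ 2 := by nlinarith
  have hsA : 0 < Real.sqrt (a + b * x ^ 2) := Real.sqrt_pos.mpr hA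
  have hsB : 0 < Real.sqrt (a + b * y ^ 2) := Real.sqrt_pos.mpr hB
  have hsA2 : Real.sqrt (a + b * x ^ 2) ^ 2 = a + b * x ^ 2 := Real.sq_sqrt hA.le
  have hsB2 : Real.sqrt (a + b * y ^ 2) ^ 2 = a + b * y ^ 2 := Real.sq_sqrt hB.le
  have hmain : x * Real.sqrt (a + b * y ^ 2) ≤ y * Real.sqrt (a + b * x ^ 2) := by
    have h1 : (x * Real.sqrt (a + b * y ^ 2)) ^ 2 ≤ (y * Real.sqrt (a + b * x ^ 2)) ^ 2 := by
      rw [mul_pow, mul_pow, hsA2, hsB2]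
      nlinarith [pow_le_pow_left₀ hx hxy 2]
    have h2 := Real.sqrt_le_sqrt h1
    rwa [Real.sqrt_sq (mul_nonneg hx hsB.le), Real.sqrt_sq (mul_nonneg hy hsA.le)] at h2
  constructor
  · rw [div_le_div_iff₀ hsA hsB]; exact hmain
  · constructor
    · intro heq
      rw [div_eq_div_iff hsA.ne' hsB.ne'] at heq
      have hsq : (x * Real.sqrt (a + b * y ^ 2)) ^ 2 = (y * Real.sqrt (a + b * x ^ 2)) ^ 2 := by
        rw [heq]
      rw [mul_pow, mul_pow, hsA2, hsB2] at hsq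
      have : x ^ 2 = y ^ 2 := by nlinarith
      nlinarith
    · intro heq; rw [heq]

/-- if `δ = 0` and `σ ≠ 0`, then `|λ_k| ≤ |λ_h|` implies
`|λ_k|/κ(k) ≤ |λ_h|/κ(h)`, with equality if and only if `|λ_k| = |λ_h|`. -/
theorem stmt_18 (n : ℕ) (hn : 2 ≤ n) (δ σ : ℝ) (hδ : δ = 0) (hσ : σ ≠ 0)
    (h k : ℕ) (hh1 : 1 ≤ h) (hhn : h ≤ n) (hk1 : 1 ≤ k) (hkn : k ≤ n)
    (hle : |lam n δ σ k| ≤ |lam n δ σ h|) :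
    |lam n δ σ k| / kap n k ≤ |lam n δ σ h| / kap n h ∧
    (|lam n δ σ k| / kap n k = |lam n δ σ h| / kap n h ↔
      |lam n δ σ k| = |lam n δ σ h|) := by
  have hσ2 : 0 < σ ^ 2 := by positivity
  have hn1 : (0:ℝ) < (n:ℝ) - 1 := by
    have : (2:ℝ) ≤ n := by exact_mod_cast hn
    linarith
  have hnpos : (0:ℝ) < (n:ℝ) := by linarith
  have key : ∀ m : ℕ, kap n m =
      Real.sqrt (1 / (n:ℝ) + (1 / (2 * σ ^ 2 * ((n:ℝ) - 1))) * |lam n δ σ m| ^ 2) := by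
    intro m
    unfold kap lam
    rw [hδ, sq_abs]
    congr 1
    field_simp
    ring
  rw [key h, key k]
  exact aux18 _ _ _ _ (by positivity) (by positivity) (abs_nonneg _) (abs_nonneg _) hle
end
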